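/- Let φ : ℕ → ℝ be positive, non-decreasing, tending to infinity, θ irrational with convergent denominators q_k, and set ψ(n) = 1/(n·φ(n)). Then ∑_{k≥0} ∑_{n=q_k}^{q_{k+1}-1} min(ψ(n), ‖q_k θ‖) = ∞ if and only if ∑_{k≥0} log(min(φ(q_k), q_{k+1}/q_k))/φ(q_k) = ∞. -/

import Mathlib

/-!
Write `A_k` for the `k`-th block sum and `B_k = log (min (φ q_k) (q_{k+1} / q_k)) / φ q_k`.
Since `1 / (2 q_{k+1}) ≤ ‖q_k θ‖ ≤ 1 / q_{k+1}`, on `[q_k, q_{k+1})` the minimum is `‖q_k θ‖` up to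
`n ≈ q_{k+1} / φ` and `ψ n` beyond; comparing `∑ 1/n` with `log` gives `A_k ≤ 2 B_k + 2 / q_k`, and
`B_k ≤ 8 A_k` unless `φ` doubles between `q_k` and `q_{k+1}`. The `1 / q_k` are summable because
`q_{k+2} ≥ 2 q_k`, and the indices where `φ ∘ q` doubles contribute a convergent series: at such
indices `φ (q_k)` lies in pairwise distinct dyadic ranges `[2^i, 2^{i+1})`, and
`∑ (i + 1) / 2^i < ∞`.
-/

open MeasureTheory Filter Real
open scoped ENNReal Classical

/-- Distance from a real number to the nearest integer. -/
noncomputable def distNearestInt (x : ℝ) : ℝ := |x - round x|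

lemma distNearestInt_le_abs_sub (x : ℝ) (z : ℤ) : distNearestInt x ≤ |x - z| := round_le x z

lemma le_distNearestInt_of_le_abs_sub {x c : ℝ} {z : ℤ} (hc : c ≤ |x - z|)
    (hz : |x - z| + c ≤ 1) : c ≤ distNearestInt x := by
  rcases eq_or_ne (round x) z with h | h
  · rwa [distNearestInt, h]
  · have h1 : (1 : ℝ) ≤ |(z : ℝ) - round x| := by
      exact_mod_cast Int.one_le_abs (sub_ne_zero.2 h.symm)
    have := abs_sub_le (z : ℝ) x (round x)
    rw [abs_sub_comm (z : ℝ) x] at this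
    unfold distNearestInt
    linarith

open GenContFract (of)

namespace GenContFract

variable {θ : ℝ} (hθ : Irrational θ)
include hθ

lemma not_terminatedAt_of_irrational (n : ℕ) : ¬(of θ).TerminatedAt n := fun h => by
  obtain ⟨x, hx⟩ := (terminates_iff_rat θ).1 ⟨n, h⟩
  exact hθ ⟨x, hx.symm⟩

lemma one_le_of_den (n : ℕ) : 1 ≤ (of θ).dens n := by
  have := succ_nth_fib_le_of_nth_den (v := θ) (n := n)
    (Or.inr (not_terminatedAt_of_irrational hθ _))
  exact le_trans (by exact_mod_cast Nat.fib_pos.2 n.succ_pos) this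

lemma of_den_add_le (n : ℕ) : (of θ).dens n + (of θ).dens (n + 1) ≤ (of θ).dens (n + 2) := by
  obtain ⟨gp, hgp⟩ := Option.ne_none_iff_exists'.1 (not_terminatedAt_of_irrational hθ (n + 1))
  have hb : 1 ≤ gp.b := of_one_le_get?_partDen (partDen_eq_s_b hgp)
  have := one_le_of_den hθ (n + 1)
  rw [dens_recurrence hgp rfl rfl, of_partNum_eq_one (partNum_eq_s_a hgp)]
  nlinarith

lemma exists_int_eq_of_num (n : ℕ) : ∃ z : ℤ, (of θ).nums n = z := by
  induction n using Nat.strong_induction_on with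
  | _ n ih =>
    match n with
    | 0 => exact ⟨⌊θ⌋, by rw [zeroth_num_eq_h, of_h_eq_floor]⟩
    | 1 =>
      obtain ⟨gp, hgp⟩ := Option.ne_none_iff_exists'.1 (not_terminatedAt_of_irrational hθ 0)
      obtain ⟨b, hb⟩ := exists_int_eq_of_partDen (partDen_eq_s_b hgp)
      refine ⟨b * ⌊θ⌋ + 1, ?_⟩
      rw [first_num_eq hgp, of_partNum_eq_one (partNum_eq_s_a hgp), of_h_eq_floor, hb]
      push_cast
      ring
    | m + 2 =>
      obtain ⟨gp, hgp⟩ := Option.ne_none_iff_exists'.1 (not_terminatedAt_of_irrational hθ (m + 1))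
      obtain ⟨b, hb⟩ := exists_int_eq_of_partDen (partDen_eq_s_b hgp)
      obtain ⟨z₀, hz₀⟩ := ih m (by omega)
      obtain ⟨z₁, hz₁⟩ := ih (m + 1) (by omega)
      refine ⟨b * z₁ + z₀, ?_⟩
      rw [nums_recurrence hgp hz₀ hz₁, of_partNum_eq_one (partNum_eq_s_a hgp), hb]
      push_cast
      ring

lemma abs_of_den_mul_sub_num_le (n : ℕ) :
    |(of θ).dens n * θ - (of θ).nums n| ≤ 1 / (of θ).dens (n + 1) := by
  have hB := one_le_of_den hθ n
  have h := abs_sub_convs_le (not_terminatedAt_of_irrational hθ n)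
  rw [conv_eq_num_div_den] at h
  have hB0 : 0 < (of θ).dens n := by linarith
  calc |(of θ).dens n * θ - (of θ).nums n|
      = |(of θ).dens n * (θ - (of θ).nums n / (of θ).dens n)| := by congr 1; field_simp
    _ = (of θ).dens n * |θ - (of θ).nums n / (of θ).dens n| := by rw [abs_mul, abs_of_pos hB0]
    _ ≤ (of θ).dens n * (1 / ((of θ).dens n * (of θ).dens (n + 1))) := by gcongr
    _ = 1 / (of θ).dens (n + 1) := by field_simp

/-- The two consecutive errors `dₙ = qₙθ - pₙ` satisfy `qₙ₊₁ dₙ - qₙ dₙ₊₁ = ±1`, so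
`qₙ₊₁ |dₙ| ≥ 1 - qₙ/qₙ₊₂ ≥ 1/2`. -/
lemma one_div_two_mul_le_abs_of_den_mul_sub_num (n : ℕ) :
    1 / (2 * (of θ).dens (n + 1)) ≤ |(of θ).dens n * θ - (of θ).nums n| := by
  set B := (of θ).dens
  set A := (of θ).nums
  have hdet : A n * B (n + 1) - B n * A (n + 1) = (-1) ^ (n + 1) :=
    (SimpContFract.of θ).determinant (not_terminatedAt_of_irrational hθ n)
  have hB : 1 ≤ B n := one_le_of_den hθ n
  have hB₁ : 1 ≤ B (n + 1) := one_le_of_den hθ (n + 1)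
  have hB₂ : B n + B (n + 1) ≤ B (n + 2) := of_den_add_le hθ n
  have hmono : B n ≤ B (n + 1) := of_den_mono
  have herr := abs_of_den_mul_sub_num_le hθ (n + 1)
  have hunit : 1 ≤ B (n + 1) * |B n * θ - A n| + B n * |B (n + 1) * θ - A (n + 1)| := by
    calc (1 : ℝ) = |B (n + 1) * (B n * θ - A n) - B n * (B (n + 1) * θ - A (n + 1))| := by
          rw [show B (n + 1) * (B n * θ - A n) - B n * (B (n + 1) * θ - A (n + 1))
            = -(A n * B (n + 1) - B n * A (n + 1)) by ring, hdet, abs_neg, abs_pow, abs_neg,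
            abs_one, one_pow]
      _ ≤ _ := by
        refine (abs_sub _ _).trans_eq ?_
        rw [abs_mul, abs_mul, abs_of_pos (by linarith : 0 < B (n + 1)),
          abs_of_pos (by linarith : 0 < B n)]
  have : B n * |B (n + 1) * θ - A (n + 1)| ≤ 1 / 2 := by
    calc B n * |B (n + 1) * θ - A (n + 1)| ≤ B n * (1 / B (n + 2)) := by gcongr
      _ ≤ 1 / 2 := by rw [mul_one_div, div_le_iff₀ (by linarith)]; linarith
  rw [div_le_iff₀ (by linarith)]
  nlinarith

lemma distNearestInt_of_den_mul_le (n : ℕ) :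
    distNearestInt ((of θ).dens n * θ) ≤ 1 / (of θ).dens (n + 1) := by
  obtain ⟨z, hz⟩ := exists_int_eq_of_num hθ n
  exact (distNearestInt_le_abs_sub _ z).trans (hz ▸ abs_of_den_mul_sub_num_le hθ n)

lemma one_div_two_mul_le_distNearestInt_of_den_mul (n : ℕ) :
    1 / (2 * (of θ).dens (n + 2)) ≤ distNearestInt ((of θ).dens (n + 1) * θ) := by
  have h2 : 2 ≤ (of θ).dens (n + 2) := by
    linarith [of_den_add_le hθ n, one_le_of_den hθ n, one_le_of_den hθ (n + 1)]
  obtain ⟨z, hz⟩ := exists_int_eq_of_num hθ (n + 1)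
  have hlo := one_div_two_mul_le_abs_of_den_mul_sub_num hθ (n + 1)
  have hup := abs_of_den_mul_sub_num_le hθ (n + 1)
  rw [hz] at hlo hup
  refine le_distNearestInt_of_le_abs_sub hlo ?_
  have : 1 / (of θ).dens (n + 2) ≤ 1 / 2 := one_div_le_one_div_of_le two_pos h2
  linarith [show 1 / (2 * (of θ).dens (n + 2)) = 1 / (of θ).dens (n + 2) / 2 by ring]

end GenContFract

lemma summable_inv_of_two_mul_le {a : ℕ → ℝ} (ha : ∀ k, 0 < a k) (h : ∀ k, 2 * a k ≤ a (k + 2)) :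
    Summable fun k => (a k)⁻¹ := by
  have hpow (i j : ℕ) : 2 ^ j * a i ≤ a (2 * j + i) := by
    induction j with
    | zero => simp
    | succ j ih =>
      rw [show 2 * (j + 1) + i = 2 * j + i + 2 by ring, pow_succ]
      linarith [h (2 * j + i)]
  have hsub (i : ℕ) : Summable fun j => (a (2 * j + i))⁻¹ := by
    refine ((summable_geometric_two).mul_left (a i)⁻¹).of_nonneg_of_le
      (fun j => (inv_pos.2 (ha _)).le) fun j => ?_
    rw [one_div, inv_pow, ← mul_inv, mul_comm (a i)]
    exact inv_anti₀ (by have := ha i; positivity) (hpow i j)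
  exact .even_add_odd (hsub 0) (hsub 1)

lemma log_div_le_sum_Ico_inv {a b : ℕ} (ha : 1 ≤ a) (hab : a ≤ b) :
    log (b / a) ≤ ∑ n ∈ Finset.Ico a b, (n : ℝ)⁻¹ := by
  have ha0 : (0 : ℝ) < a := by exact_mod_cast ha
  have hb0 : (0 : ℝ) < b := ha0.trans_le (by exact_mod_cast hab)
  rw [← integral_inv_of_pos ha0 hb0]
  exact AntitoneOn.integral_le_sum_Ico hab fun x hx y _ hxy =>
    inv_anti₀ (ha0.trans_le hx.1) hxy

lemma sum_Ico_inv_le_inv_add_log_div {a b : ℕ} (ha : 1 ≤ a) (hab : a ≤ b) :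
    ∑ n ∈ Finset.Ico a b, (n : ℝ)⁻¹ ≤ (a : ℝ)⁻¹ + log (b / a) := by
  have ha0 : (0 : ℝ) < a := by exact_mod_cast ha
  have hb0 : (0 : ℝ) < b := ha0.trans_le (by exact_mod_cast hab)
  have hshift := AntitoneOn.sum_le_integral_Ico hab (f := fun x : ℝ => x⁻¹) fun x hx y _ hxy =>
    inv_anti₀ (ha0.trans_le hx.1) hxy
  rw [integral_inv_of_pos ha0 hb0] at hshift
  calc ∑ n ∈ Finset.Ico a b, (n : ℝ)⁻¹ ≤ ∑ n ∈ Finset.Ico a (b + 1), (n : ℝ)⁻¹ :=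
        Finset.sum_le_sum_of_subset_of_nonneg (Finset.Ico_subset_Ico_right b.le_succ)
          fun _ _ _ => by positivity
    _ = (a : ℝ)⁻¹ + ∑ n ∈ Finset.Ico a b, ((n + 1 : ℕ) : ℝ)⁻¹ := by
        rw [Finset.sum_eq_sum_Ico_succ_bot (by omega), Finset.sum_Ico_add' (fun n : ℕ => (n : ℝ)⁻¹)]
    _ ≤ _ := by gcongr

lemma one_le_min_div {Q Q' : ℕ} {F : ℝ} (hF : 1 ≤ F) (hQ : 1 ≤ Q) (hQQ' : Q ≤ Q') :
    1 ≤ min F ((Q' : ℝ) / Q) :=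
  le_min hF ((one_le_div (by exact_mod_cast hQ)).2 (by exact_mod_cast hQQ'))

/-- Where `1 / (n F)` falls below `1 / Q'`, clamped to the block `[Q, Q']`. -/
noncomputable def cutoff (Q Q' : ℕ) (F : ℝ) : ℕ := max Q ⌈(Q' : ℝ) / F⌉₊

section cutoff

variable {Q Q' : ℕ} {F : ℝ}

lemma le_cutoff : Q ≤ cutoff Q Q' F := le_max_left _ _

lemma cutoff_le (hQQ' : Q ≤ Q') (hF : 1 ≤ F) : cutoff Q Q' F ≤ Q' :=
  max_le hQQ' (Nat.ceil_le.2 (div_le_self (Nat.cast_nonneg _) hF))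

lemma le_cutoff_mul (hF : 0 < F) : (Q' : ℝ) ≤ cutoff Q Q' F * F := by
  rw [← div_le_iff₀ hF]
  exact (Nat.le_ceil _).trans (by exact_mod_cast le_max_right _ _)

lemma cutoff_eq_or (hF : 0 < F) :
    cutoff Q Q' F = Q ∨ (Q * F < Q' ∧ (cutoff Q Q' F : ℝ) < Q' / F + 1) := by
  rcases le_or_gt ⌈(Q' : ℝ) / F⌉₊ Q with h | h
  · exact .inl (max_eq_left h)
  · refine .inr ⟨(lt_div_iff₀ hF).1 (Nat.lt_ceil.1 h), ?_⟩
    rw [cutoff, max_eq_right h.le]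
    exact Nat.ceil_lt_add_one (by positivity)

lemma log_div_cutoff_le (hQ : 1 ≤ Q) (hQQ' : Q ≤ Q') (hF : 0 < F) :
    log (Q' / cutoff Q Q' F) ≤ log (min F (Q' / Q)) := by
  have hQ0 : (0 : ℝ) < Q := by exact_mod_cast hQ
  have hM0 : (0 : ℝ) < cutoff Q Q' F := hQ0.trans_le (by exact_mod_cast le_cutoff)
  have hQ'0 : (0 : ℝ) < Q' := hQ0.trans_le (by exact_mod_cast hQQ')
  refine log_le_log (by positivity) (le_min ?_ ?_)
  · rw [div_le_iff₀ hM0, mul_comm]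
    exact le_cutoff_mul hF
  · exact div_le_div_of_nonneg_left hQ'0.le hQ0 (by exact_mod_cast le_cutoff)

lemma log_min_le_two_mul_log_div_cutoff (hQ : 1 ≤ Q) (hQQ' : Q ≤ Q') (hF : 4 ≤ F) :
    log (min F (Q' / Q)) ≤ 2 * log (Q' / cutoff Q Q' F) := by
  have hQ0 : (0 : ℝ) < Q := by exact_mod_cast hQ
  have hF0 : 0 < F := by linarith
  have hmin := one_le_min_div (by linarith) hQ hQQ'
  have := log_nonneg hmin
  rcases cutoff_eq_or (Q := Q) (Q' := Q') hF0 with h | ⟨hQF, hM⟩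
  · rw [h]
    linarith [log_le_log (by linarith) (min_le_right F ((Q' : ℝ) / Q))]
  · have hQ'0 : (0 : ℝ) < Q' := by nlinarith
    have hM0 : (0 : ℝ) < cutoff Q Q' F := hQ0.trans_le (by exact_mod_cast le_cutoff)
    have hhalf : log (F / 2) ≤ log (Q' / cutoff Q Q' F) := by
      refine log_le_log (by positivity) ?_
      rw [le_div_iff₀ hM0]
      have : (1 : ℝ) ≤ Q' / F := by
        rw [le_div_iff₀ hF0]; nlinarith [(by exact_mod_cast hQ : (1 : ℝ) ≤ Q)]
      calc F / 2 * cutoff Q Q' F ≤ F / 2 * (2 * (Q' / F)) := by gcongr; linarith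
        _ = Q' := by field_simp
    have h4 : log 4 = 2 * log 2 := by
      rw [show (4 : ℝ) = 2 ^ 2 by norm_num, log_pow]; push_cast; ring
    have := log_le_log (by norm_num) hF
    have := log_le_log (by positivity) (min_le_left F ((Q' : ℝ) / Q))
    rw [log_div hF0.ne' two_ne_zero] at hhalf
    linarith

end cutoff

noncomputable def blockSum (φ : ℕ → ℝ) (Q Q' : ℕ) (r : ℝ) : ℝ :=
  ∑ n ∈ Finset.Ico Q Q', min (1 / ((n : ℝ) * φ n)) r

section blockSum

variable {φ : ℕ → ℝ} {Q M Q' : ℕ} {r : ℝ}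

lemma blockSum_nonneg (hφ : ∀ n, Q ≤ n → 0 ≤ φ n) (hr : 0 ≤ r) : 0 ≤ blockSum φ Q Q' r :=
  Finset.sum_nonneg fun n hn => by
    have := hφ n (Finset.mem_Ico.1 hn).1
    positivity

lemma blockSum_le (hQM : Q ≤ M) (hMQ' : M ≤ Q') (hM : 1 ≤ M) {F : ℝ} (hF : 0 < F)
    (hφ : ∀ n, M ≤ n → F ≤ φ n) :
    blockSum φ Q Q' r ≤ (M - Q : ℕ) * r + ((M : ℝ)⁻¹ + log (Q' / M)) / F := by
  rw [blockSum, ← Finset.sum_Ico_consecutive _ hQM hMQ']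
  gcongr ?_ + ?_
  · calc _ ≤ ∑ _ ∈ Finset.Ico Q M, r := Finset.sum_le_sum fun _ _ => min_le_right _ _
      _ = _ := by simp
  · calc _ ≤ ∑ n ∈ Finset.Ico M Q', (n : ℝ)⁻¹ / F := Finset.sum_le_sum fun n hn => ?_
      _ ≤ _ := by
        rw [← Finset.sum_div]
        gcongr
        exact sum_Ico_inv_le_inv_add_log_div hM hMQ'
    have hMn := (Finset.mem_Ico.1 hn).1
    have hn0 : (0 : ℝ) < n := by exact_mod_cast hM.trans hMn
    calc min (1 / ((n : ℝ) * φ n)) r ≤ 1 / (n * F) := by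
          refine (min_le_left _ _).trans ?_
          gcongr
          exact hφ n hMn
      _ = (n : ℝ)⁻¹ / F := by ring

lemma log_div_le_blockSum (hQM : Q ≤ M) (hMQ' : M ≤ Q') (hM : 1 ≤ M) {G : ℝ}
    (hMG : (Q' : ℝ) ≤ M * G) (hφpos : ∀ n, 0 < φ n) (hφ : ∀ n, n < Q' → φ n ≤ G)
    (hr : 1 / (2 * Q') ≤ r) :
    log (Q' / M) / (2 * G) ≤ blockSum φ Q Q' r := by
  have hG : 0 < G := (hφpos 0).trans_le (hφ 0 (by omega))
  have hr0 : 0 ≤ r := (by positivity : (0 : ℝ) ≤ 1 / (2 * Q')).trans hr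
  calc log (Q' / M) / (2 * G) ≤ ∑ n ∈ Finset.Ico M Q', (n : ℝ)⁻¹ / (2 * G) := by
        rw [← Finset.sum_div]
        gcongr
        exact log_div_le_sum_Ico_inv hM hMQ'
    _ ≤ ∑ n ∈ Finset.Ico M Q', min (1 / ((n : ℝ) * φ n)) r := Finset.sum_le_sum fun n hn => ?_
    _ ≤ blockSum φ Q Q' r :=
        Finset.sum_le_sum_of_subset_of_nonneg (Finset.Ico_subset_Ico_left hQM) fun n _ _ => by
          have := hφpos n
          positivity
  obtain ⟨hMn, hnQ'⟩ := Finset.mem_Ico.1 hn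
  have hn : (M : ℝ) ≤ n := by exact_mod_cast hMn
  have hn0 : (0 : ℝ) < n := by linarith [(by exact_mod_cast hM : (1 : ℝ) ≤ M)]
  have hφn := hφ n hnQ'
  rw [show (n : ℝ)⁻¹ / (2 * G) = 1 / (2 * (n * G)) by ring]
  refine le_min ?_ (le_trans ?_ hr)
  · have := hφpos n
    exact one_div_le_one_div_of_le (by positivity) (by nlinarith)
  · have hQ' : (0 : ℝ) < Q' := by exact_mod_cast (Nat.zero_le n).trans_lt hnQ'
    exact one_div_le_one_div_of_le (by positivity) (by nlinarith)

lemma blockSum_le_log_min (hQ : 1 ≤ Q) (hQQ' : Q ≤ Q') {F : ℝ} (hF : 4 ≤ F)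
    (hφ : ∀ n, Q ≤ n → F ≤ φ n) (hr0 : 0 ≤ r) (hr : r ≤ 1 / Q') :
    blockSum φ Q Q' r ≤ 2 * (log (min F (Q' / Q)) / F) + 2 / Q := by
  have hQ0 : (0 : ℝ) < Q := by exact_mod_cast hQ
  have hF0 : 0 < F := by linarith
  have hinv : (cutoff Q Q' F : ℝ)⁻¹ / F ≤ 1 / Q := by
    rw [div_le_iff₀ hF0, one_div]
    calc (cutoff Q Q' F : ℝ)⁻¹ ≤ (Q : ℝ)⁻¹ := inv_anti₀ hQ0 (by exact_mod_cast le_cutoff)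
      _ ≤ (Q : ℝ)⁻¹ * F := le_mul_of_one_le_right (by positivity) (by linarith)
  have hcount : (cutoff Q Q' F - Q : ℕ) * r ≤ log (min F (Q' / Q)) / F + 1 / Q := by
    rcases cutoff_eq_or (Q := Q) (Q' := Q') hF0 with h | ⟨hQF, hM⟩
    · rw [h, Nat.sub_self, Nat.cast_zero, zero_mul]
      have := log_nonneg (one_le_min_div (F := F) (by linarith) hQ hQQ')
      positivity
    · have hQ'0 : (0 : ℝ) < Q' := by nlinarith
      have hlogF : 1 ≤ log F := by
        rw [le_log_iff_exp_le hF0]; linarith [exp_one_lt_d9]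
      calc ((cutoff Q Q' F - Q : ℕ) : ℝ) * r ≤ cutoff Q Q' F * (1 / Q') := by
            gcongr
            exact_mod_cast Nat.sub_le _ Q
        _ ≤ (Q' / F + 1) * (1 / Q') := by gcongr
        _ = 1 / F + 1 / Q' := by field_simp
        _ ≤ log (min F (Q' / Q)) / F + 1 / Q := by
            rw [min_eq_left ((le_div_iff₀ hQ0).2 (by linarith))]
            gcongr
  have hsplit := blockSum_le (r := r) le_cutoff (cutoff_le (F := F) hQQ' (by linarith))
    (hQ.trans le_cutoff) hF0 fun n hn => hφ n (le_cutoff.trans hn)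
  rw [add_div] at hsplit
  have := div_le_div_of_nonneg_right (log_div_cutoff_le hQ hQQ' hF0) hF0.le
  linarith [show 2 / (Q : ℝ) = 1 / Q + 1 / Q by ring]

lemma log_min_div_le_blockSum (hQ : 1 ≤ Q) (hQQ' : Q ≤ Q') {G : ℝ} (hG : 4 ≤ G)
    (hφpos : ∀ n, 0 < φ n) (hφ : ∀ n, n < Q' → φ n ≤ G) (hr : 1 / (2 * Q') ≤ r) :
    log (min G (Q' / Q)) / (4 * G) ≤ blockSum φ Q Q' r :=
  calc log (min G (Q' / Q)) / (4 * G) ≤ 2 * log (Q' / cutoff Q Q' G) / (4 * G) := by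
        gcongr
        exact log_min_le_two_mul_log_div_cutoff hQ hQQ' hG
    _ = log (Q' / cutoff Q Q' G) / (2 * G) := by ring
    _ ≤ blockSum φ Q Q' r :=
        log_div_le_blockSum le_cutoff (cutoff_le hQQ' (by linarith)) (hQ.trans le_cutoff)
          (le_cutoff_mul (by linarith)) hφpos hφ hr

lemma log_min_div_le_blockSum_add (hQ : 1 ≤ Q) (hQQ' : Q ≤ Q') (hφQ : 4 ≤ φ Q)
    (hφpos : ∀ n, 0 < φ n) (hφmono : Monotone φ) (hr : 1 / (2 * Q') ≤ r) :
    log (min (φ Q) (Q' / Q)) / φ Q ≤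
      8 * blockSum φ Q Q' r + if 2 * φ Q ≤ φ Q' then log (φ Q) / φ Q else 0 := by
  have hmin := one_le_min_div (F := φ Q) (by linarith) hQ hQQ'
  have hsum : 0 ≤ blockSum φ Q Q' r :=
    blockSum_nonneg (fun n _ => (hφpos n).le) ((by positivity : (0 : ℝ) ≤ 1 / (2 * Q')).trans hr)
  split_ifs with hjump
  · have : log (min (φ Q) (Q' / Q)) ≤ log (φ Q) := log_le_log (by linarith) (min_le_left _ _)
    have := div_le_div_of_nonneg_right this (hφpos Q).le
    linarith
  · push Not at hjump
    set G := φ Q'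
    have hφG : φ Q ≤ G := hφmono hQQ'
    have hlow := log_min_div_le_blockSum hQ hQQ' (hφQ.trans hφG) hφpos
      (fun n hn => hφmono hn.le) hr
    have hlog : log (min (φ Q) (Q' / Q)) ≤ log (min G (Q' / Q)) :=
      log_le_log (by linarith) (min_le_min_right _ hφG)
    have hlog0 := log_nonneg (hmin.trans (min_le_min_right _ hφG))
    calc log (min (φ Q) (Q' / Q)) / φ Q ≤ log (min G (Q' / Q)) / φ Q := by gcongr
      _ ≤ log (min G (Q' / Q)) * (2 / G) := by
        rw [div_eq_mul_one_div]
        refine mul_le_mul_of_nonneg_left ?_ hlog0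
        rw [div_le_div_iff₀ (hφpos Q) (by linarith)]
        linarith
      _ = 8 * (log (min G (Q' / Q)) / (4 * G)) := by ring
      _ ≤ _ := by linarith

end blockSum

lemma summable_indicator_log_div_of_monotone {F : ℕ → ℝ} (hF : Monotone F) (h1 : ∀ k, 1 ≤ F k) :
    Summable ({k | 2 * F k ≤ F (k + 1)}.indicator fun k => log (F k) / F k) := by
  set e : ℕ → ℕ := fun k => Nat.log 2 ⌊F k⌋₊
  have hpow_le (k : ℕ) : (2 : ℝ) ^ e k ≤ F k := by
    have := Nat.pow_log_le_self 2 (Nat.floor_pos.2 (h1 k)).ne'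
    exact (by exact_mod_cast this : (2 : ℝ) ^ e k ≤ ⌊F k⌋₊).trans
      (Nat.floor_le (by linarith [h1 k]))
  have hlt_pow (k : ℕ) : F k < 2 ^ (e k + 1) := by
    have := Nat.lt_pow_succ_log_self one_lt_two ⌊F k⌋₊
    exact (Nat.lt_floor_add_one (F k)).trans_le (by exact_mod_cast this)
  have hbound (k : ℕ) : log (F k) / F k ≤ ((e k : ℝ) + 1) * log 2 * (1 / 2) ^ e k := by
    have hlog : log (F k) ≤ ((e k : ℝ) + 1) * log 2 := by
      rw [← Nat.cast_succ, ← log_pow]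
      exact log_le_log (by linarith [h1 k]) (hlt_pow k).le
    rw [one_div_pow, mul_one_div]
    exact div_le_div₀ (by positivity) hlog (by positivity) (hpow_le k)
  have hinj : Function.Injective fun k : {k | 2 * F k ≤ F (k + 1)} => e k := by
    refine StrictMono.injective fun a b hab => ?_
    have : (2 : ℝ) ^ (e a + 1) < 2 ^ (e b + 1) :=
      calc (2 : ℝ) ^ (e a + 1) = 2 * 2 ^ e a := by ring
        _ ≤ 2 * F a := by linarith [hpow_le a]
        _ ≤ F (a + 1) := a.2
        _ ≤ F b := hF (Subtype.mk_lt_mk.1 hab)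
        _ < 2 ^ (e b + 1) := hlt_pow b
    have := (pow_lt_pow_iff_right₀ one_lt_two).1 this
    simpa using this
  have hgeom : Summable fun m : ℕ => ((m : ℝ) + 1) * log 2 * (1 / 2) ^ m := by
    have := ((summable_pow_mul_geometric_of_norm_lt_one 1 (r := (1 / 2 : ℝ)) (by norm_num)).add
      (summable_geometric_of_lt_one (by norm_num) (by norm_num : (1 / 2 : ℝ) < 1))).mul_right
        (log 2)
    exact this.congr fun m => by ring
  rw [← summable_subtype_iff_indicator]
  exact (hgeom.comp_injective hinj).of_nonneg_of_le
    (fun k => div_nonneg (log_nonneg (h1 k)) (by linarith [h1 k])) fun k => hbound k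

section summability

variable {φ : ℕ → ℝ} {q : ℕ → ℕ} {r : ℕ → ℝ}

lemma summable_blockSum_of_summable_log_min (hq1 : ∀ k, 1 ≤ q k) (hqmono : Monotone q)
    (hqtop : Tendsto q atTop atTop) (hqsum : Summable fun k => (q k : ℝ)⁻¹) (hφmono : Monotone φ)
    (hφtop : Tendsto φ atTop atTop) (hr : ∀ᶠ k in atTop, 0 ≤ r k ∧ r k ≤ 1 / q (k + 1))
    (hB : Summable fun k => log (min (φ (q k)) (q (k + 1) / q k)) / φ (q k)) :
    Summable fun k => blockSum φ (q k) (q (k + 1)) (r k) := by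
  refine .of_norm_bounded_eventually_nat ((hB.mul_left 2).add (hqsum.mul_left 2)) ?_
  filter_upwards [(hφtop.comp hqtop).eventually_ge_atTop 4, hr]
    with k (hφ4 : 4 ≤ φ (q k)) ⟨hr0, hr1⟩
  have hφ : ∀ n, q k ≤ n → φ (q k) ≤ φ n := fun n hn => hφmono hn
  rw [Real.norm_of_nonneg (blockSum_nonneg (fun n hn => by linarith [hφ n hn]) hr0)]
  simpa only [div_eq_mul_inv, mul_one] using
    blockSum_le_log_min (hq1 k) (hqmono (Nat.le_add_right k 1)) hφ4 hφ hr0 hr1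

lemma summable_log_min_of_summable_blockSum (hq1 : ∀ k, 1 ≤ q k) (hqmono : Monotone q)
    (hqtop : Tendsto q atTop atTop) (hφpos : ∀ n, 0 < φ n) (hφmono : Monotone φ)
    (hφtop : Tendsto φ atTop atTop) (hr : ∀ᶠ k in atTop, 1 / (2 * q (k + 1)) ≤ r k)
    (hA : Summable fun k => blockSum φ (q k) (q (k + 1)) (r k)) :
    Summable fun k => log (min (φ (q k)) (q (k + 1) / q k)) / φ (q k) := by
  obtain ⟨K, hK⟩ := eventually_atTop.1 (((hφtop.comp hqtop).eventually_ge_atTop 4).and hr)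
  simp only [Function.comp_apply] at hK
  have hjump := summable_indicator_log_div_of_monotone (F := fun k => φ (q (k + K)))
    (fun a b hab => hφmono (hqmono (by omega))) fun k => by linarith [(hK (k + K) le_add_self).1]
  rw [← summable_nat_add_iff K] at hA ⊢
  refine .of_nonneg_of_le (fun k => ?_) (fun k => ?_) ((hA.mul_left 8).add hjump)
  · have hmin := one_le_min_div (F := φ (q (k + K))) (by linarith [(hK (k + K) le_add_self).1])
      (hq1 (k + K)) (hqmono (Nat.le_add_right (k + K) 1))
    exact div_nonneg (log_nonneg hmin) (hφpos _).le
  · obtain ⟨hφ4, hr⟩ := hK (k + K) le_add_self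
    have := log_min_div_le_blockSum_add (hq1 (k + K)) (hqmono (Nat.le_add_right (k + K) 1)) hφ4
      hφpos hφmono hr
    simpa [Set.indicator_apply, add_right_comm] using this

end summability

theorem khintchine_sequence_condition_equivalence
    (θ : ℝ) (hθ : Irrational θ) (q : ℕ → ℕ)
    (hq : ∀ k, (q k : ℝ) = (GenContFract.of θ).dens k)
    (φ : ℕ → ℝ) (hφpos : ∀ n, 0 < φ n) (hφmono : ∀ m n, m ≤ n → φ m ≤ φ n)
    (hφtop : Tendsto φ atTop atTop) :
    (¬ Summable fun k =>
        ∑ n ∈ Finset.Ico (q k) (q (k + 1)),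
          min (1 / ((n : ℝ) * φ n)) (distNearestInt ((q k : ℝ) * θ))) ↔
      ¬ Summable fun k =>
        Real.log (min (φ (q k)) ((q (k + 1) : ℝ) / (q k : ℝ))) / φ (q k) := by
  have hq1 (k : ℕ) : 1 ≤ q k := by exact_mod_cast (hq k).symm ▸ GenContFract.one_le_of_den hθ k
  have hqadd (k : ℕ) : q k + q (k + 1) ≤ q (k + 2) := by
    have := GenContFract.of_den_add_le hθ k
    rw [← hq, ← hq, ← hq] at this
    exact_mod_cast this
  have hqmono : Monotone q := monotone_nat_of_le_succ fun k => by
    have : (q k : ℝ) ≤ q (k + 1) := by rw [hq, hq]; exact GenContFract.of_den_mono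
    exact_mod_cast this
  have hqtop : Tendsto q atTop atTop := (tendsto_add_atTop_iff_nat 1).1 <|
    StrictMono.tendsto_atTop <| strictMono_nat_of_lt_succ fun k => by
      show q (k + 1) < q (k + 2); have := hqadd k; have := hq1 k; omega
  have hqsum : Summable fun k => (q k : ℝ)⁻¹ :=
    summable_inv_of_two_mul_le (fun k => by exact_mod_cast hq1 k) fun k => by
      have := hqadd k; have := hqmono (Nat.le_add_right k 1); exact_mod_cast (by omega)
  have hr_le (k : ℕ) : distNearestInt (q k * θ) ≤ 1 / q (k + 1) := by
    simpa only [hq] using GenContFract.distNearestInt_of_den_mul_le hθ k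
  have hr_ge (k : ℕ) : 1 / (2 * q (k + 2)) ≤ distNearestInt (q (k + 1) * θ) := by
    simpa only [hq] using GenContFract.one_div_two_mul_le_distNearestInt_of_den_mul hθ k
  have hφmono' : Monotone φ := fun m n h => hφmono m n h
  refine not_congr ⟨summable_log_min_of_summable_blockSum hq1 hqmono hqtop hφpos hφmono' hφtop
    (eventually_atTop.2 ⟨1, fun k hk => ?_⟩), summable_blockSum_of_summable_log_min hq1 hqmono
    hqtop hqsum hφmono' hφtop (Eventually.of_forall fun k => ⟨abs_nonneg _, hr_le k⟩)⟩
  obtain ⟨j, rfl⟩ := Nat.exists_eq_add_of_le' hk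
  exact hr_ge j
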